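/- Let A₁ = {h : [0,1]² → ℂ continuous | h(s,0) = h(s,1) and h(0,t) = conj(h(1, t + 1/2 mod 1))} and A₂ = {h : [0,1]² → ℂ continuous | h(s,0) = h(s,1) and h(0,t) = conj(h(1,t))}. Then the untwisting map h ↦ h' defined by h'(s,t) = h(s, t + s/2 mod 1) is a *-isomorphism of real C*-algebras from A₁ to A₂. -/
import Mathlib


open Complex

set_option synthInstance.maxHeartbeats 1000000
set_option maxHeartbeats 1000000

noncomputable section

/-- Functions on the square, periodic in the second variable (modelled on
`[0,1] × (ℝ/ℤ)`), with the twisted boundary condition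
`h(0,t) = conj (h(1, t + 1/2))`. -/
def twistedAlg : StarSubalgebra ℝ C(unitInterval × AddCircle (1 : ℝ), ℂ) where
  carrier := {h | ∀ t : AddCircle (1 : ℝ),
      h (0, t) = (starRingEnd ℂ) (h (1, t + ((1 / 2 : ℝ) : AddCircle (1 : ℝ))))}
  mul_mem' := by
    intro a b ha hb t
    simp only [ContinuousMap.mul_apply, ha t, hb t, map_mul]
  one_mem' := by intro t; simp
  add_mem' := by
    intro a b ha hb t
    simp only [ContinuousMap.add_apply, ha t, hb t, map_add]
  zero_mem' := by intro t; simp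
  algebraMap_mem' := by intro r t; simp [Complex.conj_ofReal]
  star_mem' := by
    intro f hf t
    simp only [ContinuousMap.star_apply, hf t]
    simp

/-- Functions on the square, periodic in the second variable, with the untwisted
boundary condition `h(0,t) = conj (h(1,t))`. -/
def untwistedAlg : StarSubalgebra ℝ C(unitInterval × AddCircle (1 : ℝ), ℂ) where
  carrier := {h | ∀ t : AddCircle (1 : ℝ), h (0, t) = (starRingEnd ℂ) (h (1, t))}
  mul_mem' := by
    intro a b ha hb t
    simp only [ContinuousMap.mul_apply, ha t, hb t, map_mul]
  one_mem' := by intro t; simp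
  add_mem' := by
    intro a b ha hb t
    simp only [ContinuousMap.add_apply, ha t, hb t, map_add]
  zero_mem' := by intro t; simp
  algebraMap_mem' := by intro r t; simp [Complex.conj_ofReal]
  star_mem' := by
    intro f hf t
    simp only [ContinuousMap.star_apply, hf t]
    simp

/-- The untwisting change of variables `(s,t) ↦ (s, t + s/2)`. -/
def untwistMap : C(unitInterval × AddCircle (1 : ℝ), unitInterval × AddCircle (1 : ℝ)) where
  toFun p := (p.1, p.2 + (((p.1 : ℝ) / 2 : ℝ) : AddCircle (1 : ℝ)))
  continuous_toFun := by
    refine continuous_fst.prodMk (continuous_snd.add ?_)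
    exact (AddCircle.continuous_mk' 1).comp
      ((continuous_subtype_val.comp continuous_fst).div_const 2)

/-- The inverse change of variables `(s,t) ↦ (s, t - s/2)`. -/
def retwistMap : C(unitInterval × AddCircle (1 : ℝ), unitInterval × AddCircle (1 : ℝ)) where
  toFun p := (p.1, p.2 - (((p.1 : ℝ) / 2 : ℝ) : AddCircle (1 : ℝ)))
  continuous_toFun := by
    refine continuous_fst.prodMk (continuous_snd.sub ?_)
    exact (AddCircle.continuous_mk' 1).comp
      ((continuous_subtype_val.comp continuous_fst).div_const 2)

lemma untwist_mem (h : twistedAlg) :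
    (h : C(unitInterval × AddCircle (1 : ℝ), ℂ)).comp untwistMap ∈ untwistedAlg := by
  intro t
  have h2 := h.2 t
  simp only [ContinuousMap.comp_apply, untwistMap, ContinuousMap.coe_mk]
  have h0 : (((0 : unitInterval) : ℝ) / 2 : ℝ) = (0 : ℝ) := by norm_num
  have h1 : (((1 : unitInterval) : ℝ) / 2 : ℝ) = (1 / 2 : ℝ) := by norm_num
  rw [h0, h1]
  simpa using h2

lemma retwist_mem (g : untwistedAlg) :
    (g : C(unitInterval × AddCircle (1 : ℝ), ℂ)).comp retwistMap ∈ twistedAlg := by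
  intro t
  have h2 := g.2 t
  simp only [ContinuousMap.comp_apply, retwistMap, ContinuousMap.coe_mk]
  have h0 : (((0 : unitInterval) : ℝ) / 2 : ℝ) = (0 : ℝ) := by norm_num
  have h1 : (((1 : unitInterval) : ℝ) / 2 : ℝ) = (1 / 2 : ℝ) := by norm_num
  rw [h0, h1]
  have : t + ((1 / 2 : ℝ) : AddCircle (1 : ℝ)) - ((1 / 2 : ℝ) : AddCircle (1 : ℝ)) = t := by
    abel
  rw [this]
  simpa using h2

/-- The untwisting map `h ↦ h'`, `h'(s, t) = h(s, t + s/2 mod 1)`, is a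
*-isomorphism of real C*-algebras from the twisted algebra to the untwisted one. -/
theorem untwisting_starAlgEquiv :
    ∃ e : twistedAlg ≃⋆ₐ[ℝ] untwistedAlg,
      ∀ (h : twistedAlg) (s : unitInterval) (t : AddCircle (1 : ℝ)),
        ((e h : C(unitInterval × AddCircle (1 : ℝ), ℂ)) (s, t))
          = (h : C(unitInterval × AddCircle (1 : ℝ), ℂ))
              (s, t + (((s : ℝ) / 2 : ℝ) : AddCircle (1 : ℝ))) := by
  refine ⟨{ toFun := fun h => ⟨(h : C(_, ℂ)).comp untwistMap, untwist_mem h⟩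
            invFun := fun g => ⟨(g : C(_, ℂ)).comp retwistMap, retwist_mem g⟩
            left_inv := ?_
            right_inv := ?_
            map_mul' := ?_
            map_add' := ?_
            map_smul' := ?_
            map_star' := ?_ }, ?_⟩
  · intro h
    ext p
    simp only [ContinuousMap.comp_apply, untwistMap, retwistMap, ContinuousMap.coe_mk]
    congr 1
    ext
    · rfl
    · show p.2 - _ + _ = p.2; abel
  · intro g
    ext p
    simp only [ContinuousMap.comp_apply, untwistMap, retwistMap, ContinuousMap.coe_mk]
    congr 1
    ext
    · rfl
    · show p.2 + _ - _ = p.2; abel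
  · intro a b; ext p; simp
  · intro a b; ext p; simp
  · intro a; ext p; simp
  · intro r a; ext p; simp
  · intro h s t; rfl
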